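/- Let Z be as above (vertex set of size γ, every cut of capacity at least (1−1/γ)ℓ, C(v) ≤ ℓ for all v), and define x_e = ((γ−1)/γ)·(c(e)/C(v) + c(e)/C(u)). Then for every subset S ⊂ V(Z) with 2 ≤ |S| ≤ γ−1: Σ_{e∈E(S)} x_e ≤ ((γ−1)/γ)·|S| − (1 − 1/γ)² ≤ |S| − 1. -/

import Mathlib

open Finset

/-- Edges of the multigraph incident on `v`. -/
def deltaV {V E : Type*} [Fintype E] [DecidableEq V] (ends : E → V × V) (v : V) :
    Finset E :=
  univ.filter fun e => (ends e).1 = v ∨ (ends e).2 = v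

/-- Weighted degree `C(v) = ∑_{e ∈ δ(v)} c(e)`. -/
noncomputable def Cdeg {V E : Type*} [Fintype E] [DecidableEq V] (ends : E → V × V)
    (c : E → ℝ) (v : V) : ℝ :=
  ∑ e ∈ deltaV ends v, c e

/-- Edges with both endpoints in `S`. -/
def insideE {V E : Type*} [Fintype E] [DecidableEq V] (ends : E → V × V)
    (S : Finset V) : Finset E :=
  univ.filter fun e => (ends e).1 ∈ S ∧ (ends e).2 ∈ S

/-- Edges with exactly one endpoint in `S`. -/
def crossE {V E : Type*} [Fintype E] [DecidableEq V] (ends : E → V × V)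
    (S : Finset V) : Finset E :=
  univ.filter fun e =>
    ((ends e).1 ∈ S ∧ (ends e).2 ∉ S) ∨ ((ends e).1 ∉ S ∧ (ends e).2 ∈ S)

/-- The LP value `x_e = ((γ−1)/γ)·(c(e)/C(u) + c(e)/C(v))` for an edge `e = (u,v)`. -/
noncomputable def xLP {V E : Type*} [Fintype E] [DecidableEq V] (ends : E → V × V)
    (c : E → ℝ) (γ : ℕ) (e : E) : ℝ :=
  ((γ : ℝ) - 1) / γ *
    (c e / Cdeg ends c (ends e).1 + c e / Cdeg ends c (ends e).2)

/-!
Split the weighted degree of each `v ∈ S` as `C(v) = a_v + b_v`, where `a_v` is the weight of the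
edges inside `S` at `v` and `b_v` that of the edges leaving `S` at `v`. Then
`∑_{e ∈ E(S)} (c(e)/C(u) + c(e)/C(w)) = ∑_{v ∈ S} a_v / C(v)`, and since `C(v) ≤ ℓ` each term is
at most `1 - b_v / ℓ`. Summing, the `b_v` add up to the capacity of the cut `(S, V ∖ S)`, which is
at least `(1 - 1/γ) ℓ`; multiplying by `(γ - 1)/γ = 1 - 1/γ` gives the first bound, and the second
is the inequality `t (2 - |S| - t) ≤ 0` for `t = 1/γ`.
-/

section Incidence

variable {V E : Type*} [DecidableEq V] (ends : E → V × V) (c : E → ℝ)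

def incidenceWeight (e : E) (v : V) : ℝ :=
  (if (ends e).1 = v then c e else 0) + (if (ends e).2 = v then c e else 0)

variable {ends c}

lemma incidenceWeight_nonneg (hc : ∀ e, 0 ≤ c e) (e : E) (v : V) :
    0 ≤ incidenceWeight ends c e v := by
  unfold incidenceWeight
  split_ifs <;> linarith [hc e]

lemma sum_incidenceWeight_mul (S : Finset V) (g : V → ℝ) (e : E) :
    ∑ v ∈ S, incidenceWeight ends c e v * g v =
      (if (ends e).1 ∈ S then c e * g (ends e).1 else 0) +
        (if (ends e).2 ∈ S then c e * g (ends e).2 else 0) := by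
  simp only [incidenceWeight, add_mul, ite_mul, zero_mul, sum_add_distrib, sum_ite_eq]

lemma sum_incidenceWeight_eq_Cdeg [Fintype E] (hnoloop : ∀ e, (ends e).1 ≠ (ends e).2) (v : V) :
    ∑ e, incidenceWeight ends c e v = Cdeg ends c v := by
  rw [Cdeg, deltaV, sum_filter]
  refine sum_congr rfl fun e _ => ?_
  by_cases h1 : (ends e).1 = v <;> by_cases h2 : (ends e).2 = v <;>
    simp [incidenceWeight, h1, h2]
  exact (hnoloop e (h1.trans h2.symm)).elim

lemma Cdeg_eq_sum_insideE_add_sum_crossE [Fintype E] (hnoloop : ∀ e, (ends e).1 ≠ (ends e).2)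
    {S : Finset V} {v : V} (hv : v ∈ S) :
    Cdeg ends c v = ∑ e ∈ insideE ends S, incidenceWeight ends c e v +
      ∑ e ∈ crossE ends S, incidenceWeight ends c e v := by
  classical
  have hdisj : Disjoint (insideE ends S) (crossE ends S) := by
    simp only [insideE, crossE, disjoint_filter]
    tauto
  rw [← sum_union hdisj, ← sum_incidenceWeight_eq_Cdeg hnoloop]
  refine (sum_subset (subset_univ _) fun e _ he => ?_).symm
  simp only [insideE, crossE, ← filter_or, mem_filter, mem_univ, true_and] at he
  have h1 : (ends e).1 ≠ v := fun h => he (by subst h; tauto)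
  have h2 : (ends e).2 ≠ v := fun h => he (by subst h; tauto)
  simp [incidenceWeight, h1, h2]

lemma sum_insideE_div_Cdeg [Fintype E] (S : Finset V) :
    ∑ e ∈ insideE ends S, (c e / Cdeg ends c (ends e).1 + c e / Cdeg ends c (ends e).2) =
      ∑ v ∈ S, (∑ e ∈ insideE ends S, incidenceWeight ends c e v) / Cdeg ends c v := by
  simp_rw [sum_div, div_eq_mul_inv]
  rw [sum_comm]
  refine sum_congr rfl fun e he => ?_
  simp only [insideE, mem_filter, mem_univ, true_and] at he
  rw [sum_incidenceWeight_mul, if_pos he.1, if_pos he.2]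

lemma sum_sum_crossE_incidenceWeight [Fintype E] (S : Finset V) :
    ∑ v ∈ S, ∑ e ∈ crossE ends S, incidenceWeight ends c e v = ∑ e ∈ crossE ends S, c e := by
  rw [sum_comm]
  refine sum_congr rfl fun e he => ?_
  simp only [crossE, mem_filter, mem_univ, true_and] at he
  have := sum_incidenceWeight_mul (ends := ends) (c := c) S (fun _ => 1) e
  simp only [mul_one] at this
  rw [this]
  rcases he with ⟨h1, h2⟩ | ⟨h1, h2⟩ <;> simp [h1, h2]

end Incidence

lemma div_add_le_one_sub_div {a b ℓ : ℝ} (ha : 0 ≤ a) (hb : 0 ≤ b)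
    (hab : a + b ≤ ℓ) : a / (a + b) ≤ 1 - b / ℓ := by
  rcases (add_nonneg ha hb).eq_or_lt with h | h
  · obtain ⟨rfl, rfl⟩ : a = 0 ∧ b = 0 := ⟨by linarith, by linarith⟩
    simp
  · have : b / ℓ ≤ b / (a + b) := div_le_div_of_nonneg_left hb h hab
    have : a / (a + b) = 1 - b / (a + b) := by field_simp; ring
    linarith

lemma sum_insideE_div_Cdeg_le {V E : Type*} [Fintype E] [DecidableEq V]
    {ends : E → V × V} {c : E → ℝ} {ℓ : ℝ}
    (hnoloop : ∀ e, (ends e).1 ≠ (ends e).2) (hc : ∀ e, 0 ≤ c e)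
    (hCub : ∀ v, Cdeg ends c v ≤ ℓ) (S : Finset V) :
    ∑ e ∈ insideE ends S, (c e / Cdeg ends c (ends e).1 + c e / Cdeg ends c (ends e).2) ≤
      S.card - (∑ e ∈ crossE ends S, c e) / ℓ := by
  rw [sum_insideE_div_Cdeg, ← sum_sum_crossE_incidenceWeight, sum_div, ← nsmul_one,
    ← sum_const, ← sum_sub_distrib]
  refine sum_le_sum fun v hv => ?_
  have hsplit := Cdeg_eq_sum_insideE_add_sum_crossE (c := c) hnoloop hv
  rw [hsplit]
  refine div_add_le_one_sub_div (sum_nonneg fun e _ => incidenceWeight_nonneg hc e v)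
    (sum_nonneg fun e _ => incidenceWeight_nonneg hc e v) ?_
  exact hsplit ▸ hCub v

theorem stmt_12_general {V E : Type*} [Fintype V] [Fintype E] [DecidableEq V]
    (ends : E → V × V) (c : E → ℝ) (ℓ : ℝ) (hℓ : 0 < ℓ)
    (hnoloop : ∀ e, (ends e).1 ≠ (ends e).2)
    (hc : ∀ e, 0 ≤ c e)
    (hCub : ∀ v, Cdeg ends c v ≤ ℓ)
    (hcut : ∀ S : Finset V, S.Nonempty → S ≠ univ →
      (1 - 1 / (Fintype.card V : ℝ)) * ℓ ≤ ∑ e ∈ crossE ends S, c e) :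
    ∀ S : Finset V, 2 ≤ S.card → S.card ≤ Fintype.card V - 1 →
      ∑ e ∈ insideE ends S, xLP ends c (Fintype.card V) e ≤
          ((Fintype.card V : ℝ) - 1) / (Fintype.card V : ℝ) * S.card -
            (1 - 1 / (Fintype.card V : ℝ)) ^ 2 ∧
        ((Fintype.card V : ℝ) - 1) / (Fintype.card V : ℝ) * S.card -
            (1 - 1 / (Fintype.card V : ℝ)) ^ 2 ≤ (S.card : ℝ) - 1 := by
  intro S hS2 hSle
  simp only [xLP, ← mul_sum]
  have hSV : S.card ≤ Fintype.card V := card_le_univ S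
  have hSne : S.Nonempty := card_pos.mp (by omega)
  have hSuniv : S ≠ univ := by
    rintro rfl
    rw [card_univ] at hSle
    omega
  have hγ : (2 : ℝ) ≤ Fintype.card V := by exact_mod_cast hS2.trans hSV
  have hs : (2 : ℝ) ≤ S.card := by exact_mod_cast hS2
  set γ : ℝ := (Fintype.card V : ℝ)
  have hfactor : (γ - 1) / γ = 1 - 1 / γ := by field_simp
  have hcross : 1 - 1 / γ ≤ (∑ e ∈ crossE ends S, c e) / ℓ :=
    (le_div_iff₀ hℓ).mpr (hcut S hSne hSuniv)
  have hinside := sum_insideE_div_Cdeg_le hnoloop hc hCub S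
  have hinv_nonneg : 0 ≤ 1 / γ := by positivity
  have hinv_le : 1 / γ ≤ 1 / 2 := one_div_le_one_div_of_le two_pos hγ
  rw [hfactor]
  constructor
  · calc _ ≤ (1 - 1 / γ) * (S.card - (1 - 1 / γ)) :=
        mul_le_mul_of_nonneg_left (by linarith) (by linarith)
      _ = _ := by ring
  · nlinarith [mul_nonneg hinv_nonneg (sub_nonneg.mpr hs)]

/-- Subtour constraint of the degree-bounded spanning tree LP: if every cut of `Z` has
capacity at least `(1−1/γ)ℓ` and `C(v) ≤ ℓ` for all `v`, then for every `S` with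
`2 ≤ |S| ≤ γ−1`:
`∑_{e∈E(S)} x_e ≤ ((γ−1)/γ)|S| − (1−1/γ)² ≤ |S| − 1`. -/
theorem stmt_12 {V E : Type*} [Fintype V] [Fintype E] [DecidableEq V]
    (ends : E → V × V) (c : E → ℝ) (ℓ : ℝ) (hℓ : 0 < ℓ)
    (hγ : 2 ≤ Fintype.card V)
    (hnoloop : ∀ e, (ends e).1 ≠ (ends e).2)
    (hc : ∀ e, 0 ≤ c e)
    (hCub : ∀ v, Cdeg ends c v ≤ ℓ)
    (hcut : ∀ S : Finset V, S.Nonempty → S ≠ univ →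
      (1 - 1 / (Fintype.card V : ℝ)) * ℓ ≤ ∑ e ∈ crossE ends S, c e) :
    ∀ S : Finset V, 2 ≤ S.card → S.card ≤ Fintype.card V - 1 →
      ∑ e ∈ insideE ends S, xLP ends c (Fintype.card V) e ≤
          ((Fintype.card V : ℝ) - 1) / (Fintype.card V : ℝ) * S.card -
            (1 - 1 / (Fintype.card V : ℝ)) ^ 2 ∧
        ((Fintype.card V : ℝ) - 1) / (Fintype.card V : ℝ) * S.card -
            (1 - 1 / (Fintype.card V : ℝ)) ^ 2 ≤ (S.card : ℝ) - 1 :=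
  stmt_12_general ends c ℓ hℓ hnoloop hc hCub hcut
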